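/- arXiv:1310.3314 — 2 statements merged into one kernel-verified Lean document; each statement's English description precedes it below -/
import Mathlib

section
/- (One-step unrolling inequality used in the proof of the query decomposition lemma.) Let Q = ⋈_{F∈E} R_F be a natural join query on hypergraph H = (V, E) with finite relations R_F, let x be a fractional edge cover of H, let V = I ⊎ J with 1 ≤ |I| < |V|, and let j ∈ I be any attribute. Set I' = I ∖ {j}, J' = J ∪ {j}, L = ⋈_{F∈E_I} π_I(R_F), and L' = ⋈_{F∈E_{I'}} π_{I'}(R_F). Then ∑_{t_I ∈ L} ∏_{F∈E_J} |R_F ⋉ t_I|^{x_F} ≤ ∑_{t_{I'} ∈ L'} ∏_{F∈E_{J'}} |R_F ⋉ t_{I'}|^{x_F}. -/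
/-!
Group the tuples `t ∈ L` by their restriction `t'` to `I' = I ∖ {j}`, which lies in `L'`. Within
one fiber, the factors of the edges `F ∌ j` do not depend on `t`, and the edges `F ∋ j` with
`F ⊆ I` contribute a factor `1`. For the edges through `j`, the semijoins `R_F ⋉ t` over the
fiber are pairwise disjoint subsets of `R_F ⋉ t'`, since the tuples of a fiber differ only at
`j ∈ F`. As the weights `x_F` of the edges through `j` add up to at least `1`, Hölder's
inequality turns this into the bound by `∏_{F ∋ j} |R_F ⋉ t'| ^ x_F`.
-/

open Finset

namespace Real

theorem prod_rpow_le_sum_div_mul_of_le_one {ι : Type*} {s : Finset ι} {w r : ι → ℝ}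
    (hw : ∀ i ∈ s, 0 ≤ w i) (hW : 1 ≤ ∑ i ∈ s, w i)
    (hr0 : ∀ i ∈ s, 0 ≤ r i) (hr1 : ∀ i ∈ s, r i ≤ 1) :
    ∏ i ∈ s, r i ^ w i ≤ ∑ i ∈ s, w i / (∑ k ∈ s, w k) * r i := by
  set W := ∑ k ∈ s, w k
  have hW0 : 0 < W := one_pos.trans_le hW
  calc ∏ i ∈ s, r i ^ w i ≤ ∏ i ∈ s, r i ^ (w i / W) := by
        refine prod_le_prod (fun i hi => rpow_nonneg (hr0 i hi) _) fun i hi => ?_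
        exact rpow_le_rpow_of_exponent_ge' (hr0 i hi) (hr1 i hi)
          (div_nonneg (hw i hi) hW0.le) (div_le_self (hw i hi) hW)
    _ ≤ ∑ i ∈ s, w i / W * r i :=
        geom_mean_le_arith_mean_weighted s _ _ (fun i hi => div_nonneg (hw i hi) hW0.le)
          (by rw [← sum_div, div_self hW0.ne']) hr0

theorem sum_prod_rpow_le_prod_sum_rpow {ι α : Type*} {s : Finset ι} {A : Finset α}
    {w : ι → ℝ} {f : ι → α → ℝ} (hw : ∀ i ∈ s, 0 ≤ w i) (hW : 1 ≤ ∑ i ∈ s, w i)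
    (hf : ∀ i ∈ s, ∀ a ∈ A, 0 ≤ f i a) :
    ∑ a ∈ A, ∏ i ∈ s, f i a ^ w i ≤ ∏ i ∈ s, (∑ a ∈ A, f i a) ^ w i := by
  set S := fun i => ∑ a ∈ A, f i a
  set W := ∑ k ∈ s, w k
  have hW0 : 0 < W := one_pos.trans_le hW
  have hS0 i (hi : i ∈ s) : 0 ≤ S i := sum_nonneg (hf i hi)
  have hfS i (hi : i ∈ s) a (ha : a ∈ A) : f i a ≤ S i := single_le_sum (hf i hi) ha
  -- `f i a = (f i a / S i) * S i` holds also when `S i = 0`, since then `f i a = 0`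
  have hsplit i (hi : i ∈ s) a (ha : a ∈ A) : f i a = f i a / S i * S i := by
    rcases (hS0 i hi).eq_or_lt with h | h
    · rw [← h, le_antisymm (h ▸ hfS i hi a ha) (hf i hi a ha), zero_div, zero_mul]
    · rw [div_mul_cancel₀ _ h.ne']
  calc ∑ a ∈ A, ∏ i ∈ s, f i a ^ w i
      = ∑ a ∈ A, (∏ i ∈ s, (f i a / S i) ^ w i) * ∏ i ∈ s, S i ^ w i := by
        refine sum_congr rfl fun a ha => ?_
        rw [← prod_mul_distrib]
        refine prod_congr rfl fun i hi => ?_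
        rw [← mul_rpow (div_nonneg (hf i hi a ha) (hS0 i hi)) (hS0 i hi), ← hsplit i hi a ha]
    _ ≤ ∑ a ∈ A, (∑ i ∈ s, w i / W * (f i a / S i)) * ∏ i ∈ s, S i ^ w i := by
        gcongr with a ha
        · exact prod_nonneg fun i hi => rpow_nonneg (hS0 i hi) _
        · exact prod_rpow_le_sum_div_mul_of_le_one hw hW
            (fun i hi => div_nonneg (hf i hi a ha) (hS0 i hi))
            fun i hi => div_le_one_of_le₀ (hfS i hi a ha) (hS0 i hi)
    _ = (∑ i ∈ s, w i / W * (S i / S i)) * ∏ i ∈ s, S i ^ w i := by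
        rw [← sum_mul, sum_comm]
        simp_rw [← mul_sum, ← sum_div]
        rfl
    _ ≤ 1 * ∏ i ∈ s, S i ^ w i := by
        gcongr
        · exact prod_nonneg fun i hi => rpow_nonneg (hS0 i hi) _
        calc ∑ i ∈ s, w i / W * (S i / S i) ≤ ∑ i ∈ s, w i / W :=
              sum_le_sum fun i hi => mul_le_of_le_one_right
                (div_nonneg (hw i hi) hW0.le) (div_self_le_one _)
          _ = 1 := by rw [← sum_div, div_self hW0.ne']
    _ = ∏ i ∈ s, S i ^ w i := one_mul _

end Real

theorem Set.sum_ncard_le_ncard_of_pairwiseDisjoint {ι α : Type*} {t : Finset ι} {s : ι → Set α}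
    {S : Set α} (hS : S.Finite) (hsub : ∀ i ∈ t, s i ⊆ S) (h : (t : Set ι).PairwiseDisjoint s) :
    ∑ i ∈ t, (s i).ncard ≤ S.ncard := by
  rw [← finsum_mem_coe_finset,
    ← t.finite_toSet.ncard_biUnion (fun i hi => hS.subset (hsub i hi)) h]
  exact Set.ncard_le_ncard (Set.iUnion₂_subset hsub) hS

theorem Finset.inter_insert_nonempty_iff {α : Type*} [DecidableEq α] {s t : Finset α} {a : α} :
    (s ∩ insert a t).Nonempty ↔ a ∈ s ∨ (s ∩ t).Nonempty := by
  simp only [Finset.Nonempty, mem_inter, mem_insert]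
  grind

section Semijoin

variable {V D : Type*}

def semijoin {F : Finset V} (R : Set (F → D)) (s : Finset V) (t : s → D) : Set (F → D) :=
  {u ∈ R | ∀ (v : V) (hvF : v ∈ F) (hvs : v ∈ s), u ⟨v, hvF⟩ = t ⟨v, hvs⟩}

/-- `projJoin E R s` is the join `⋈_{F ∈ E_s} π_s(R_F)`. -/
def projJoin [DecidableEq V] (E : Finset (Finset V)) (R : (F : Finset V) → Set (F → D))
    (s : Finset V) : Set (s → D) :=
  {t | ∀ F ∈ E.filter (fun F => (F ∩ s).Nonempty), (semijoin (R F) s t).Nonempty}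

variable {F s s' : Finset V}

section

variable (R : Set (F → D))

theorem semijoin_subset_semijoin_restrict₂ (hss : s' ⊆ s) (t : s → D) :
    semijoin R s t ⊆ semijoin R s' (restrict₂ (π := fun _ => D) hss t) :=
  fun _ ⟨hu, h⟩ => ⟨hu, fun v hvF hvs' => h v hvF (hss hvs')⟩

theorem semijoin_restrict₂_eq (hss : s' ⊆ s) (hF : ∀ v ∈ F, v ∈ s → v ∈ s') (t : s → D) :
    semijoin R s' (restrict₂ (π := fun _ => D) hss t) = semijoin R s t :=
  (semijoin_subset_semijoin_restrict₂ R hss t).antisymm' fun _ ⟨hu, h⟩ =>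
    ⟨hu, fun v hvF hvs => h v hvF (hF v hvF hvs)⟩

theorem semijoin_eq_singleton (hFs : F ⊆ s) {t : s → D} {u : F → D} (hu : u ∈ semijoin R s t) :
    semijoin R s t = {u} := by
  refine Set.eq_singleton_iff_unique_mem.2 ⟨hu, fun u' hu' => funext fun v => ?_⟩
  exact (hu'.2 v v.2 (hFs v.2)).trans (hu.2 v v.2 (hFs v.2)).symm

theorem disjoint_semijoin (hss : s' ⊆ s) (hsF : ∀ v ∈ s, v ∉ s' → v ∈ F) {t₁ t₂ : s → D}
    (h₁₂ : restrict₂ (π := fun _ => D) hss t₁ = restrict₂ (π := fun _ => D) hss t₂)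
    (hne : t₁ ≠ t₂) :
    Disjoint (semijoin R s t₁) (semijoin R s t₂) := by
  refine Set.disjoint_left.2 fun u hu₁ hu₂ => hne (funext fun v => ?_)
  by_cases hv : (v : V) ∈ s'
  · exact congrFun h₁₂ ⟨v, hv⟩
  · have hvF := hsF v v.2 hv
    exact (hu₁.2 v hvF v.2).symm.trans (hu₂.2 v hvF v.2)

theorem sum_ncard_semijoin_le (hR : R.Finite) (hss : s' ⊆ s) (hsF : ∀ v ∈ s, v ∉ s' → v ∈ F)
    {Φ : Finset (s → D)} {t' : s' → D} (hΦ : ∀ t ∈ Φ, restrict₂ (π := fun _ => D) hss t = t') :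
    ∑ t ∈ Φ, (semijoin R s t).ncard ≤ (semijoin R s' t').ncard := by
  refine Set.sum_ncard_le_ncard_of_pairwiseDisjoint (hR.subset (Set.sep_subset _ _))
    (fun t ht => hΦ t ht ▸ semijoin_subset_semijoin_restrict₂ R hss t) ?_
  exact fun t₁ ht₁ t₂ ht₂ hne =>
    disjoint_semijoin R hss hsF ((hΦ t₁ ht₁).trans (hΦ t₂ ht₂).symm) hne

end

variable [DecidableEq V] {E : Finset (Finset V)} {R : (F : Finset V) → Set (F → D)}

theorem restrict₂_mem_projJoin (hss : s' ⊆ s) {t : s → D} (ht : t ∈ projJoin E R s) :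
    restrict₂ (π := fun _ => D) hss t ∈ projJoin E R s' := by
  intro F hF
  rw [mem_filter] at hF
  obtain ⟨u, hu⟩ := ht F (mem_filter.2 ⟨hF.1, hF.2.mono (inter_subset_inter_left hss)⟩)
  exact ⟨u, semijoin_subset_semijoin_restrict₂ (R F) hss t hu⟩

theorem ncard_semijoin_eq_one (hF : F ∈ E) (hFs : F ⊆ s) (hFne : F.Nonempty) {t : s → D}
    (ht : t ∈ projJoin E R s) : (semijoin (R F) s t).ncard = 1 := by
  obtain ⟨u, hu⟩ := ht F (mem_filter.2 ⟨hF, by rwa [inter_eq_left.2 hFs]⟩)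
  rw [semijoin_eq_singleton (R F) hFs hu, Set.ncard_singleton]

end Semijoin

theorem sum_fiber_prod_ncard_semijoin_rpow_le {V D : Type*} [Fintype V] [DecidableEq V]
    {E : Finset (Finset V)} {R : (F : Finset V) → Set (F → D)} (hR : ∀ F ∈ E, (R F).Finite)
    {x : Finset V → ℝ} (hx0 : ∀ F ∈ E, 0 ≤ x F) {j : V}
    (hxj : 1 ≤ ∑ F ∈ E.filter (fun F => j ∈ F), x F)
    {I J : Finset V} (hunion : I ∪ J = univ) (hj : j ∈ I)
    {Φ : Finset (I → D)} {t' : I.erase j → D} (hΦL : ∀ t ∈ Φ, t ∈ projJoin E R I)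
    (hΦ : ∀ t ∈ Φ, restrict₂ (π := fun _ => D) (erase_subset j I) t = t') :
    ∑ t ∈ Φ, ∏ F ∈ E.filter (fun F => (F ∩ J).Nonempty),
        ((semijoin (R F) I t).ncard : ℝ) ^ x F
      ≤ ∏ F ∈ E.filter (fun F => (F ∩ insert j J).Nonempty),
        ((semijoin (R F) (I.erase j) t').ncard : ℝ) ^ x F := by
  set EJ := E.filter (fun F => (F ∩ J).Nonempty)
  set EJ' := E.filter (fun F => (F ∩ insert j J).Nonempty)
  set C := E.filter (fun F => j ∈ F)
  set c := ∏ F ∈ EJ'.filter (fun F => j ∉ F),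
    ((semijoin (R F) (I.erase j) t').ncard : ℝ) ^ x F
  have hC : EJ'.filter (fun F => j ∈ F) = C := by
    simp only [EJ', C, filter_filter, inter_insert_nonempty_iff]
    exact filter_congr fun F _ => by tauto
  have hfactor : ∀ t ∈ Φ, ∏ F ∈ EJ, ((semijoin (R F) I t).ncard : ℝ) ^ x F
      = (∏ F ∈ C, ((semijoin (R F) I t).ncard : ℝ) ^ x F) * c := by
    intro t ht
    have hone : ∀ F ∈ EJ', F ∉ EJ → ((semijoin (R F) I t).ncard : ℝ) ^ x F = 1 := by
      intro F hF' hF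
      simp only [EJ', EJ, mem_filter, inter_insert_nonempty_iff, not_and] at hF' hF
      have hFJ := hF hF'.1
      have hFI : F ⊆ I := fun v hv => (mem_union.1 (hunion.symm ▸ mem_univ v)).resolve_right
        fun hvJ => hFJ ⟨v, mem_inter.2 ⟨hv, hvJ⟩⟩
      rw [ncard_semijoin_eq_one hF'.1 hFI ⟨j, hF'.2.resolve_right hFJ⟩ (hΦL t ht), Nat.cast_one,
        Real.one_rpow]
    have hEJ : EJ ⊆ EJ' :=
      monotone_filter_right E fun F _ h => inter_insert_nonempty_iff.2 (Or.inr h)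
    rw [prod_subset hEJ hone, ← prod_filter_mul_prod_filter_not EJ' (fun F => j ∈ F), hC]
    congr 1
    refine prod_congr rfl fun F hF => ?_
    rw [← hΦ t ht, semijoin_restrict₂_eq]
    exact fun v hv hvI => mem_erase.2 ⟨fun h => (mem_filter.1 hF).2 (h ▸ hv), hvI⟩
  calc ∑ t ∈ Φ, ∏ F ∈ EJ, ((semijoin (R F) I t).ncard : ℝ) ^ x F
      = (∑ t ∈ Φ, ∏ F ∈ C, ((semijoin (R F) I t).ncard : ℝ) ^ x F) * c := by
        rw [sum_mul]; exact sum_congr rfl hfactor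
    _ ≤ (∏ F ∈ C, (∑ t ∈ Φ, ((semijoin (R F) I t).ncard : ℝ)) ^ x F) * c := by
        gcongr
        exact Real.sum_prod_rpow_le_prod_sum_rpow (fun F hF => hx0 F (mem_filter.1 hF).1) hxj
            fun _ _ _ _ => Nat.cast_nonneg _
    _ ≤ (∏ F ∈ C, ((semijoin (R F) (I.erase j) t').ncard : ℝ) ^ x F) * c := by
        gcongr with F hF
        · exact hx0 F (mem_filter.1 hF).1
        have hIF : ∀ v ∈ I, v ∉ I.erase j → v ∈ F := fun v hvI hv => by
          obtain rfl : v = j := by simpa [hvI] using hv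
          exact (mem_filter.1 hF).2
        exact_mod_cast sum_ncard_semijoin_le (R F) (hR F (mem_filter.1 hF).1) _ hIF hΦ
    _ = ∏ F ∈ EJ', ((semijoin (R F) (I.erase j) t').ncard : ℝ) ^ x F := by
        rw [← hC, prod_filter_mul_prod_filter_not]

theorem one_step_unrolling_general {V D : Type*} [Fintype V] [DecidableEq V]
    (E : Finset (Finset V))
    (R : (F : Finset V) → Set ({v : V // v ∈ F} → D))
    (hR : ∀ F ∈ E, (R F).Finite)
    (x : Finset V → ℝ)
    (hx0 : ∀ F ∈ E, 0 ≤ x F)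
    (hxcover : ∀ v : V, 1 ≤ ∑ F ∈ E.filter (fun F => v ∈ F), x F)
    (I J : Finset V) (hunion : I ∪ J = Finset.univ)
    (j : V) (hj : j ∈ I)
    -- the join `L = ⋈_{F ∈ E_I} π_I(R_F)`
    (hL : {tI : {v : V // v ∈ I} → D |
        ∀ F ∈ E.filter (fun F => (F ∩ I).Nonempty), ∃ u ∈ R F,
          ∀ (v : V) (hvF : v ∈ F) (hvI : v ∈ I), u ⟨v, hvF⟩ = tI ⟨v, hvI⟩}.Finite)
    -- the join `L' = ⋈_{F ∈ E_{I'}} π_{I'}(R_F)` where `I' = I.erase j`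
    (hL' : {tI' : {v : V // v ∈ I.erase j} → D |
        ∀ F ∈ E.filter (fun F => (F ∩ I.erase j).Nonempty), ∃ u ∈ R F,
          ∀ (v : V) (hvF : v ∈ F) (hvI' : v ∈ I.erase j),
            u ⟨v, hvF⟩ = tI' ⟨v, hvI'⟩}.Finite) :
    ∑ tI ∈ hL.toFinset,
      ∏ F ∈ E.filter (fun F => (F ∩ J).Nonempty),
        (({u ∈ R F | ∀ (v : V) (hvF : v ∈ F) (hvI : v ∈ I),
            u ⟨v, hvF⟩ = tI ⟨v, hvI⟩}).ncard : ℝ) ^ (x F)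
      ≤ ∑ tI' ∈ hL'.toFinset,
          ∏ F ∈ E.filter (fun F => (F ∩ insert j J).Nonempty),
            (({u ∈ R F | ∀ (v : V) (hvF : v ∈ F) (hvI' : v ∈ I.erase j),
                u ⟨v, hvF⟩ = tI' ⟨v, hvI'⟩}).ncard : ℝ) ^ (x F) := by
  classical
  have hmaps : ∀ t ∈ hL.toFinset,
      restrict₂ (π := fun _ => D) (I.erase_subset j) t ∈ hL'.toFinset := fun t ht =>
    hL'.mem_toFinset.2 (restrict₂_mem_projJoin (I.erase_subset j) (hL.mem_toFinset.1 ht))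
  rw [← sum_fiberwise_of_maps_to hmaps]
  exact sum_le_sum fun t' _ => sum_fiber_prod_ncard_semijoin_rpow_le hR hx0 (hxcover j) hunion hj
    (fun t ht => hL.mem_toFinset.1 (mem_filter.1 ht).1) fun t ht => (mem_filter.1 ht).2

/-- **One-step unrolling inequality** used in the proof of the query decomposition lemma.
With `V = I ⊎ J`, `j ∈ I`, `I' = I ∖ {j}`, `J' = J ∪ {j}`,
`L = ⋈_{F ∈ E_I} π_I(R_F)` and `L' = ⋈_{F ∈ E_{I'}} π_{I'}(R_F)`, we have
`∑_{t_I ∈ L} ∏_{F ∈ E_J} |R_F ⋉ t_I| ^ (x_F)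
  ≤ ∑_{t_{I'} ∈ L'} ∏_{F ∈ E_{J'}} |R_F ⋉ t_{I'}| ^ (x_F)`. -/
theorem one_step_unrolling {V D : Type*} [Fintype V] [DecidableEq V]
    (E : Finset (Finset V))
    (R : (F : Finset V) → Set ({v : V // v ∈ F} → D))
    (hR : ∀ F ∈ E, (R F).Finite)
    (x : Finset V → ℝ)
    (hx0 : ∀ F ∈ E, 0 ≤ x F)
    (hxcover : ∀ v : V, 1 ≤ ∑ F ∈ E.filter (fun F => v ∈ F), x F)
    (I J : Finset V) (hdisj : Disjoint I J) (hunion : I ∪ J = Finset.univ)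
    (hI1 : 1 ≤ I.card) (hIlt : I.card < Fintype.card V)
    (j : V) (hj : j ∈ I)
    -- the join `L = ⋈_{F ∈ E_I} π_I(R_F)`
    (hL : {tI : {v : V // v ∈ I} → D |
        ∀ F ∈ E.filter (fun F => (F ∩ I).Nonempty), ∃ u ∈ R F,
          ∀ (v : V) (hvF : v ∈ F) (hvI : v ∈ I), u ⟨v, hvF⟩ = tI ⟨v, hvI⟩}.Finite)
    -- the join `L' = ⋈_{F ∈ E_{I'}} π_{I'}(R_F)` where `I' = I.erase j`
    (hL' : {tI' : {v : V // v ∈ I.erase j} → D |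
        ∀ F ∈ E.filter (fun F => (F ∩ I.erase j).Nonempty), ∃ u ∈ R F,
          ∀ (v : V) (hvF : v ∈ F) (hvI' : v ∈ I.erase j),
            u ⟨v, hvF⟩ = tI' ⟨v, hvI'⟩}.Finite) :
    ∑ tI ∈ hL.toFinset,
      ∏ F ∈ E.filter (fun F => (F ∩ J).Nonempty),
        (({u ∈ R F | ∀ (v : V) (hvF : v ∈ F) (hvI : v ∈ I),
            u ⟨v, hvF⟩ = tI ⟨v, hvI⟩}).ncard : ℝ) ^ (x F)
      ≤ ∑ tI' ∈ hL'.toFinset,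
          ∏ F ∈ E.filter (fun F => (F ∩ insert j J).Nonempty),
            (({u ∈ R F | ∀ (v : V) (hvF : v ∈ F) (hvI' : v ∈ I.erase j),
                u ⟨v, hvF⟩ = tI' ⟨v, hvI'⟩}).ncard : ℝ) ^ (x F) :=
  one_step_unrolling_general E R hR x hx0 hxcover I J hunion j hj hL hL'
end

section
/- (Runtime bound for the power-of-two-choices triangle algorithm.) Let R ⊆ A × B, S ⊆ B × C, and T ⊆ A × C be finite binary relations, and let L = π_A(R) ∩ π_A(T) be the set of values a appearing as the first coordinate of both some tuple of R and some tuple of T. Then ∑_{a ∈ L} min(|σ_{A=a}R| · |σ_{A=a}T|, |S|) ≤ √(|R| · |S| · |T|), where σ_{A=a}R = {(a',b) ∈ R : a' = a} and σ_{A=a}T = {(a',c) ∈ T : a' = a}. -/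
/-!
Each summand is at most the geometric mean `√(|σ_{A=a}R| · |σ_{A=a}T| · |S|)` of the two
quantities it takes the minimum of. Summing over `a` and applying Cauchy–Schwarz to
`∑ √|σ_{A=a}R| · √|σ_{A=a}T|` bounds the sum by `√|S| · √(∑ |σ_{A=a}R|) · √(∑ |σ_{A=a}T|)`,
and the fibres `σ_{A=a}R` (resp. `σ_{A=a}T`) are disjoint, so their sizes add up to at most
`|R|` (resp. `|T|`).
-/

open Finset

theorem Finset.sum_card_fiberwise_le_card {ι κ : Type*} [DecidableEq κ] (s : Finset ι)
    (t : Finset κ) (g : ι → κ) : ∑ j ∈ t, #{i ∈ s | g i = j} ≤ #s :=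
  (sum_card_fiberwise_eq_card_filter s t g).trans_le (card_filter_le _ _)

theorem Real.min_le_sqrt_mul {x y : ℝ} (hx : 0 ≤ x) (hy : 0 ≤ y) : min x y ≤ √(x * y) :=
  Real.le_sqrt_of_sq_le <| by
    rw [sq]
    exact mul_le_mul (min_le_left x y) (min_le_right x y) (le_min hx hy) hx

theorem Real.sum_min_mul_le_sqrt {ι : Type*} (s : Finset ι) {f g : ι → ℝ} {c F G : ℝ}
    (hf : ∀ i, 0 ≤ f i) (hg : ∀ i, 0 ≤ g i) (hc : 0 ≤ c)
    (hF : ∑ i ∈ s, f i ≤ F) (hG : ∑ i ∈ s, g i ≤ G) :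
    ∑ i ∈ s, min (f i * g i) c ≤ √(F * c * G) := by
  have hF₀ : 0 ≤ F := (sum_nonneg fun i _ => hf i).trans hF
  calc ∑ i ∈ s, min (f i * g i) c
      ≤ ∑ i ∈ s, √(f i * g i * c) :=
        sum_le_sum fun i _ => min_le_sqrt_mul (mul_nonneg (hf i) (hg i)) hc
    _ = (∑ i ∈ s, √(f i) * √(g i)) * √c := by
        rw [sum_mul]
        refine sum_congr rfl fun i _ => ?_
        rw [sqrt_mul (mul_nonneg (hf i) (hg i)), sqrt_mul (hf i)]
    _ ≤ √(∑ i ∈ s, f i) * √(∑ i ∈ s, g i) * √c := by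
        gcongr
        exact sum_sqrt_mul_sqrt_le s hf hg
    _ ≤ √F * √G * √c := by gcongr
    _ = √(F * c * G) := by
        rw [mul_right_comm F, sqrt_mul' _ hc, sqrt_mul hF₀]

/-- **Runtime bound for the power-of-two-choices triangle algorithm.**
With `L = π_A(R) ∩ π_A(T)`, we have
`∑_{a ∈ L} min(|σ_{A=a}R| · |σ_{A=a}T|, |S|) ≤ √(|R|·|S|·|T|)`. -/
theorem two_choices_runtime {A B C : Type*} [DecidableEq A]
    (R : Finset (A × B)) (S : Finset (B × C)) (T : Finset (A × C)) :
    (∑ a ∈ R.image Prod.fst ∩ T.image Prod.fst,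
        (min ((R.filter (fun p => p.1 = a)).card * (T.filter (fun p => p.1 = a)).card)
          S.card : ℕ) : ℝ)
      ≤ Real.sqrt ((R.card : ℝ) * (S.card : ℝ) * (T.card : ℝ)) := by
  push_cast
  refine Real.sum_min_mul_le_sqrt _ (fun _ => Nat.cast_nonneg _) (fun _ => Nat.cast_nonneg _)
    (Nat.cast_nonneg _) ?_ ?_ <;>
  exact_mod_cast sum_card_fiberwise_le_card _ _ Prod.fst
end
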